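/- arXiv:0904.1395 — 4 statements merged into one kernel-verified Lean document; each statement's English description precedes it below -/
import Mathlib

section
/- Let k be a field of characteristic zero and let n be a positive integer. If A, B, C are elements of GL_n(k) such that C has order p for some prime number p, [A,B] = C, and [A,C] = [B,C] = 1 (i.e. C commutes with both A and B), then p ≤ n. -/
/-!
Pass to an algebraic closure `K` and view `A, B, C` as automorphisms of `Kⁿ`. Since `C ≠ 1`,
`C ^ p = 1` and `p ≠ 0` in `K`, the operator `C` has an eigenvalue `ζ ≠ 1`, which is then a
primitive `p`-th root of unity. The `ζ`-eigenspace `E` of `C` is invariant under `A` and `B`,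
and on `E` the relation `AB = C BA` reads `AB = ζ BA`. Taking determinants on `E` gives
`ζ ^ dim E = 1`, so `p ∣ dim E`, and `0 < dim E ≤ n`.
-/

open scoped commutatorElement
open Module Set

namespace Module.End

lemma isUnit_restrict {R M : Type*} [Semiring R] [AddCommMonoid M] [Module R M]
    (a : (End R M)ˣ) {p : Submodule R M} (ha : ∀ x ∈ p, (a : End R M) x ∈ p)
    (ha' : ∀ x ∈ p, (↑a⁻¹ : End R M) x ∈ p) : IsUnit ((a : End R M).restrict ha) :=
  ⟨⟨_, (↑a⁻¹ : End R M).restrict ha', by ext x; exact LinearMap.congr_fun a.mul_inv (x : M),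
    by ext x; exact LinearMap.congr_fun a.inv_mul (x : M)⟩, rfl⟩

variable {K V : Type*} [Field K] [AddCommGroup V] [Module K V]

lemma HasEigenvalue.pow_eq_one {c : End K V} {ζ : K} (hζ : c.HasEigenvalue ζ) {n : ℕ}
    (hcn : c ^ n = 1) : ζ ^ n = 1 := by
  obtain ⟨v, hv⟩ := hζ.exists_hasEigenvector
  have h := hv.pow_apply n
  rw [hcn, one_apply] at h
  exact smul_left_injective K hv.2 (show ζ ^ n • v = (1 : K) • v by rw [one_smul, ← h])

lemma exists_hasEigenvalue_ne_one_of_pow_eq_one [IsAlgClosed K] [FiniteDimensional K V]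
    {c : End K V} {p : ℕ} (hpK : (p : K) ≠ 0) (hcp : c ^ p = 1) (hc : c ≠ 1) :
    ∃ ζ, c.HasEigenvalue ζ ∧ ζ ≠ 1 := by
  have hW : MapsTo c (LinearMap.range (c - 1)) (LinearMap.range (c - 1)) := by
    rintro _ ⟨u, rfl⟩
    exact ⟨c u, by simp⟩
  have : Nontrivial (LinearMap.range (c - 1)) :=
    Submodule.nontrivial_iff_ne_bot.mpr (by simpa [LinearMap.range_eq_bot, sub_eq_zero])
  obtain ⟨ζ, hζ⟩ := exists_eigenvalue (c.restrict hW)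
  obtain ⟨⟨_, u, rfl⟩, hw⟩ := hζ.exists_hasEigenvector
  have hw' : c.HasEigenvector ζ ((c - 1) u) :=
    ⟨mem_eigenspace_iff.mpr (congrArg Subtype.val hw.apply_eq_smul), by simpa using hw.2⟩
  refine ⟨ζ, hasEigenvalue_of_hasEigenvector hw', fun hζ1 => hw'.2 ?_⟩
  -- `∑ i < p, cⁱ` kills the range of `c - 1`, but acts on a fixed vector as `p`.
  have h := congrArg (· u) (geom_sum_mul c p)
  simp only [hcp, sub_self, mul_apply, LinearMap.sum_apply, hw'.pow_apply, hζ1, one_pow,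
    one_smul, Finset.sum_const, Finset.card_range, LinearMap.zero_apply] at h
  rw [← Nat.cast_smul_eq_nsmul K, smul_eq_zero] at h
  exact h.resolve_left hpK

lemma pow_finrank_eq_one_of_mul_eq_smul_mul [FiniteDimensional K V] {a b : End K V}
    (ha : IsUnit a) (hb : IsUnit b) {ζ : K} (h : a * b = ζ • (b * a)) :
    ζ ^ finrank K V = 1 := by
  have hdet := congrArg LinearMap.det h
  rw [map_mul, LinearMap.det_smul, map_mul, mul_comm (LinearMap.det b)] at hdet
  exact ((LinearMap.isUnit_det a ha).mul (LinearMap.isUnit_det b hb)).mul_eq_right.mp hdet.symm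

theorem prime_le_finrank_of_commutatorElement_eq [IsAlgClosed K] [FiniteDimensional K V]
    {a b c : (End K V)ˣ} {p : ℕ} (hp : p.Prime) (hpK : (p : K) ≠ 0) (hc : orderOf c = p)
    (habc : ⁅a, b⁆ = c) (hac : Commute a c) (hbc : Commute b c) : p ≤ finrank K V := by
  have := Fact.mk hp
  have hcp : (c : End K V) ^ p = 1 := by
    rw [← Units.val_pow_eq_pow_val, ← hc, pow_orderOf_eq_one, Units.val_one]
  have hc1 : (c : End K V) ≠ 1 := by
    intro h
    rw [Units.val_eq_one.mp h, orderOf_one] at hc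
    exact hp.one_lt.ne hc
  obtain ⟨ζ, hζ, hζ1⟩ := exists_hasEigenvalue_ne_one_of_pow_eq_one hpK hcp hc1
  have hζp : orderOf ζ = p := orderOf_eq_prime (hζ.pow_eq_one hcp) hζ1
  set E := (c : End K V).eigenspace ζ
  have hE {f : (End K V)ˣ} (hf : Commute f c) : ∀ x ∈ E, (f : End K V) x ∈ E :=
    mapsTo_genEigenspace_of_comm hf.symm.units_val ζ 1
  have hab : (a * b : End K V) = c * (b * a) := by
    rw [← Units.val_mul, ← Units.val_mul, ← Units.val_mul, ← habc, commutatorElement_def]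
    group
  have hrel : (a : End K V).restrict (hE hac) * (b : End K V).restrict (hE hbc) =
      ζ • ((b : End K V).restrict (hE hbc) * (a : End K V).restrict (hE hac)) := by
    ext ⟨x, hx⟩
    change (a : End K V) ((b : End K V) x) = ζ • (b : End K V) ((a : End K V) x)
    rw [← mul_apply, hab, mul_apply, mul_apply]
    exact mem_eigenspace_iff.mp (hE hbc _ (hE hac x hx))
  have hdvd : p ∣ finrank K E := hζp ▸ orderOf_dvd_of_pow_eq_one
    (pow_finrank_eq_one_of_mul_eq_smul_mul (isUnit_restrict a _ (hE hac.inv_left))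
      (isUnit_restrict b _ (hE hbc.inv_left)) hrel)
  exact (Nat.le_of_dvd (Submodule.one_le_finrank_iff.mpr hζ) hdvd).trans (Submodule.finrank_le E)

end Module.End

lemma Matrix.GeneralLinearGroup.map_injective {n R S : Type*} [Fintype n] [DecidableEq n]
    [CommRing R] [CommRing S] {f : R →+* S} (hf : Function.Injective f) :
    Function.Injective (map (n := n) f) :=
  Units.map_injective (Matrix.map_injective hf)

theorem birkhoff_commutator_prime_order_le_general
    (k : Type*) [Field k] [CharZero k] (n : ℕ)
    (A B C : GL (Fin n) k) (p : ℕ) (hp : p.Prime) (hC : orderOf C = p)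
    (hAB : ⁅A, B⁆ = C) (hAC : ⁅A, C⁆ = 1) (hBC : ⁅B, C⁆ = 1) :
    p ≤ n := by
  let K := AlgebraicClosure k
  let ρ := Matrix.GeneralLinearGroup.toLin.toMonoidHom.comp
    (Matrix.GeneralLinearGroup.map (n := Fin n) (algebraMap k K))
  have hρ : Function.Injective ρ := Matrix.GeneralLinearGroup.toLin.injective.comp
    (Matrix.GeneralLinearGroup.map_injective (algebraMap k K).injective)
  have hpK : (p : K) ≠ 0 := by
    rw [← map_natCast (algebraMap k K)]
    exact (map_ne_zero _).mpr (Nat.cast_ne_zero.mpr hp.ne_zero)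
  rw [← orderOf_injective ρ hρ] at hC
  simpa using Module.End.prime_le_finrank_of_commutatorElement_eq hp hpK hC
    (by rw [← map_commutatorElement, hAB])
    ((commutatorElement_eq_one_iff_commute.mp hAC).map ρ)
    ((commutatorElement_eq_one_iff_commute.mp hBC).map ρ)

/-- **Birkhoff's lemma.** Let `k` be a field of characteristic zero and `n` a positive
integer. If `A, B, C ∈ GL_n(k)` are such that `C` has order `p` for a prime `p`,
`[A,B] = C` and `[A,C] = [B,C] = 1`, then `p ≤ n`. -/
theorem birkhoff_commutator_prime_order_le
    (k : Type*) [Field k] [CharZero k] (n : ℕ) (hn : 0 < n)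
    (A B C : GL (Fin n) k) (p : ℕ) (hp : p.Prime) (hC : orderOf C = p)
    (hAB : ⁅A, B⁆ = C) (hAC : ⁅A, C⁆ = 1) (hBC : ⁅B, C⁆ = 1) :
    p ≤ n :=
  birkhoff_commutator_prime_order_le_general k n A B C p hp hC hAB hAC hBC
end

section
/- Let k be a field of characteristic zero and let n be a positive integer. There is no injective group homomorphism from the Cremona group Bir(ℙ²), identified with the group of ℂ-algebra automorphisms of the field ℂ(x,y), into GL_n(k). -/
/-!
The torus element `σ : (x, y) ↦ (ζ x, y)`, with `ζ` a primitive `p`-th root of unity, is conjugate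
to each of its powers `σ ^ m`, `0 < m < p`: if `m d - b p = 1`, the monomial map
`(x, y) ↦ (x ^ m y ^ b, x ^ p y ^ d)` conjugates `σ ^ m` to `σ`. In `GL_n(k)`, `char k = 0`, this
forces the image of `σ` to be trivial once `p > n + 1`: an eigenvalue `μ ≠ 1` would be a primitive
`p`-th root of unity all of whose `p - 1` nontrivial powers are eigenvalues too, so all eigenvalues
are `1`, and a unipotent matrix of finite order in characteristic zero is the identity.

The monomial maps exist because `x ^ m y ^ b` and `x ^ p y ^ d` generate `ℂ(x, y)`, which has
transcendence degree `2`, so they are algebraically independent.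
-/

open MvPolynomial

noncomputable section

/-- The field `ℂ(x,y)` of rational functions in two variables. -/
abbrev K2 : Type := FractionRing (MvPolynomial (Fin 2) ℂ)

/-- The Cremona group, identified with the group of `ℂ`-algebra automorphisms
of `ℂ(x,y)`. -/
abbrev Cremona : Type := K2 ≃ₐ[ℂ] K2

universe u

open Set in
theorem IsTranscendenceBasis.algebraicIndependent_of_mem_adjoin {F : Type*} {ι E : Type u}
    [Finite ι] [Field F] [Field E] [Algebra F E] {b v : ι → E} (hb : IsTranscendenceBasis F b)
    (hv : ∀ i, b i ∈ IntermediateField.adjoin F (range v)) : AlgebraicIndependent F v := by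
  have : Algebra.IsAlgebraic (Algebra.adjoin F (range v)) E :=
    hb.isAlgebraic_iff.2 fun i ↦ IntermediateField.isAlgebraic_adjoin_iff.1
      (isAlgebraic_algebraMap (⟨b i, hv i⟩ : IntermediateField.adjoin F (range v)))
  exact (Algebra.IsAlgebraic.isTranscendenceBasis_of_le_trdeg_of_finite F v
    hb.cardinalMk_eq_trdeg.le).1

namespace Matrix

open Polynomial

variable {ι : Type*} [Fintype ι] [DecidableEq ι]

theorem charpoly_eq_of_isConj {R : Type*} [CommRing R] {a b : (Matrix ι ι R)ˣ} (h : IsConj a b) :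
    (a : Matrix ι ι R).charpoly = (b : Matrix ι ι R).charpoly := by
  obtain ⟨c, rfl⟩ := isConj_iff.1 h
  rw [Units.val_mul, Units.val_mul, coe_units_inv, charpoly_units_conj]

theorem isRoot_charpoly_pow {K : Type*} [Field K] {A : Matrix ι ι K} {μ : K}
    (hμ : A.charpoly.IsRoot μ) (m : ℕ) : (A ^ m).charpoly.IsRoot (μ ^ m) :=
  mem_spectrum_iff_isRoot_charpoly.1
    (spectrum.pow_mem_pow A m (mem_spectrum_iff_isRoot_charpoly.2 hμ))

theorem root_charpoly_eq_one_of_pow_prime_eq_one {K : Type*} [Field K] {p : ℕ}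
    (hp : p.Prime) (hcard : Fintype.card ι + 1 < p) {A : Matrix ι ι K} (hA : A ^ p = 1)
    (hpow : ∀ m, 0 < m → m < p → (A ^ m).charpoly = A.charpoly) {μ : K}
    (hμ : A.charpoly.IsRoot μ) : μ = 1 := by
  classical
  have hμp : μ ^ p = 1 := by
    have := isRoot_charpoly_pow hμ p
    rw [hA, charpoly_one, IsRoot, Polynomial.eval_pow, Polynomial.eval_sub, Polynomial.eval_X,
      Polynomial.eval_one] at this
    exact sub_eq_zero.1 (eq_zero_of_pow_eq_zero this)
  by_contra hμ1
  have : Fact p.Prime := ⟨hp⟩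
  have hinj : Set.InjOn (μ ^ ·) (Finset.Ioo 0 p) :=
    pow_injOn_Iio_orderOf.mono fun m hm ↦ by
      rw [orderOf_eq_prime hμp hμ1]; exact (Finset.mem_Ioo.1 hm).2
  have hsub : (Finset.Ioo 0 p).image (μ ^ ·) ⊆ A.charpoly.roots.toFinset := by
    intro x hx
    obtain ⟨m, hm, rfl⟩ := Finset.mem_image.1 hx
    rw [Finset.mem_Ioo] at hm
    rw [Multiset.mem_toFinset, mem_roots A.charpoly_monic.ne_zero, ← hpow m hm.1 hm.2]
    exact isRoot_charpoly_pow hμ m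
  have : p - 1 ≤ Fintype.card ι := calc
    p - 1 = ((Finset.Ioo 0 p).image (μ ^ ·)).card := by
      rw [Finset.card_image_of_injOn hinj, Nat.card_Ioo, Nat.sub_zero]
    _ ≤ A.charpoly.roots.toFinset.card := Finset.card_le_card hsub
    _ ≤ Multiset.card A.charpoly.roots := Multiset.toFinset_card_le _
    _ ≤ A.charpoly.natDegree := card_roots' _
    _ = Fintype.card ι := charpoly_natDegree_eq_dim A
  omega

theorem isNilpotent_sub_one_of_isRoot_charpoly {L : Type*} [Field L] [IsAlgClosed L]
    {A : Matrix ι ι L} (hroots : ∀ μ, A.charpoly.IsRoot μ → μ = 1) : IsNilpotent (A - 1) := by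
  have hsplit := IsAlgClosed.splits A.charpoly
  have hchar : A.charpoly = (Polynomial.X - Polynomial.C 1) ^ Fintype.card ι := by
    rw [hsplit.eq_prod_roots_of_monic A.charpoly_monic, Multiset.eq_replicate.2
      ⟨(charpoly_natDegree_eq_dim A ▸ hsplit.natDegree_eq_card_roots).symm,
        fun μ hμ ↦ hroots μ (isRoot_of_mem_roots hμ)⟩, Multiset.map_replicate,
      Multiset.prod_replicate]
  exact ⟨Fintype.card ι, by simpa [hchar] using A.aeval_self_charpoly⟩

theorem eq_one_of_isNilpotent_sub_one_of_pow_eq_one {K : Type*} [Field K] [CharZero K] {p : ℕ}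
    (hp : p ≠ 0) {A : Matrix ι ι K} (hnil : IsNilpotent (A - 1)) (hA : A ^ p = 1) : A = 1 := by
  set f := toLinAlgEquiv' A
  have hf : Module.End.IsSemisimple f := by
    refine Module.End.isSemisimple_of_squarefree_aeval_eq_zero
      (separable_X_pow_sub_C (1 : K) (Nat.cast_ne_zero.2 hp) one_ne_zero).squarefree ?_
    simp [f, aeval_algEquiv, hA]
  have : f - 1 = 0 := Module.End.eq_zero_of_isNilpotent_isSemisimple
    (by simpa [f] using hnil.map (toLinAlgEquiv' (R := K) (n := ι)))
    (by simpa using Module.End.isSemisimple_sub_algebraMap_iff (μ := (1 : K)).2 hf)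
  simpa [f, sub_eq_zero] using this

theorem eq_one_of_pow_prime_eq_one_of_charpoly_pow_eq {K : Type*} [Field K] [CharZero K] {p : ℕ}
    (hp : p.Prime) (hcard : Fintype.card ι + 1 < p) {A : Matrix ι ι K} (hA : A ^ p = 1)
    (hpow : ∀ m, 0 < m → m < p → (A ^ m).charpoly = A.charpoly) : A = 1 := by
  set B := A.map (algebraMap K (AlgebraicClosure K)) with hBdef
  have hB : B ^ p = 1 := by
    rw [hBdef, ← Matrix.map_pow, hA, Matrix.map_one _ (map_zero _) (map_one _)]
  have hBpow : ∀ m, 0 < m → m < p → (B ^ m).charpoly = B.charpoly := fun m hm hmp ↦ by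
    rw [hBdef, ← Matrix.map_pow, charpoly_map, charpoly_map, hpow m hm hmp]
  have hB1 : B = 1 := eq_one_of_isNilpotent_sub_one_of_pow_eq_one hp.ne_zero
    (isNilpotent_sub_one_of_isRoot_charpoly fun _ ↦
      root_charpoly_eq_one_of_pow_prime_eq_one hp hcard hB hBpow) hB
  refine map_injective (algebraMap K (AlgebraicClosure K)).injective ?_
  change B = _
  rw [hB1]
  exact (Matrix.map_one _ (map_zero _) (map_one _)).symm

theorem GeneralLinearGroup.eq_one_of_pow_prime_eq_one_of_isConj_pow {K : Type*} [Field K]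
    [CharZero K] {p : ℕ} (hp : p.Prime) (hcard : Fintype.card ι + 1 < p) {g : GL ι K}
    (hg : g ^ p = 1) (hconj : ∀ m, 0 < m → m < p → IsConj (g ^ m) g) : g = 1 := by
  refine Units.val_eq_one.1 (eq_one_of_pow_prime_eq_one_of_charpoly_pow_eq hp hcard ?_
    fun m hm hmp ↦ ?_)
  · rw [← Units.val_pow_eq_pow_val, hg, Units.val_one]
  · rw [← Units.val_pow_eq_pow_val, charpoly_eq_of_isConj (hconj m hm hmp)]

end Matrix

namespace K2

open Matrix

def var (i : Fin 2) : K2 := algebraMap (MvPolynomial (Fin 2) ℂ) K2 (X i)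

theorem isTranscendenceBasis_var : IsTranscendenceBasis ℂ var :=
  have := IsLocalization.isAlgebraic K2 (nonZeroDivisors (MvPolynomial (Fin 2) ℂ))
  (IsTranscendenceBasis.mvPolynomial (Fin 2) ℂ).algebraMap_comp

theorem var_ne_zero (i : Fin 2) : var i ≠ 0 :=
  isTranscendenceBasis_var.1.ne_zero i

theorem algHom_ext {A : Type*} [CommRing A] [Algebra ℂ A] {f g : K2 →ₐ[ℂ] A}
    (h : ∀ i, f (var i) = g (var i)) : f = g :=
  IsLocalization.algHom_ext (nonZeroDivisors _) (MvPolynomial.algHom_ext h)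

def lift (v : Fin 2 → K2) (hv : AlgebraicIndependent ℂ v) : K2 →ₐ[ℂ] K2 :=
  IsFractionRing.liftAlgHom (algebraicIndependent_iff_injective_aeval.1 hv)

@[simp]
theorem lift_var {v : Fin 2 → K2} (hv : AlgebraicIndependent ℂ v) (i : Fin 2) :
    lift v hv (var i) = v i := by
  rw [lift, var, IsFractionRing.liftAlgHom_apply, IsFractionRing.lift_algebraMap]
  exact aeval_X v i

def laurentMonomial (e : Fin 2 → ℤ) : K2 := ∏ i, var i ^ e i

theorem laurentMonomial_add (e f : Fin 2 → ℤ) :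
    laurentMonomial (e + f) = laurentMonomial e * laurentMonomial f := by
  simp only [laurentMonomial, Pi.add_apply, zpow_add₀ (var_ne_zero _), Finset.prod_mul_distrib]

theorem laurentMonomial_zsmul (k : ℤ) (e : Fin 2 → ℤ) :
    laurentMonomial (k • e) = laurentMonomial e ^ k := by
  simp only [laurentMonomial, Pi.smul_apply, smul_eq_mul, mul_comm k, _root_.zpow_mul,
    Finset.prod_zpow]

theorem laurentMonomial_vecMul (e : Fin 2 → ℤ) (A : Matrix (Fin 2) (Fin 2) ℤ) :
    laurentMonomial (e ᵥ* A) = ∏ i, laurentMonomial (A i) ^ e i := by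
  rw [vecMul_eq_sum, Fin.sum_univ_two, laurentMonomial_add, laurentMonomial_zsmul,
    laurentMonomial_zsmul, Fin.prod_univ_two]

theorem laurentMonomial_one_row (i : Fin 2) :
    laurentMonomial ((1 : Matrix (Fin 2) (Fin 2) ℤ) i) = var i := by
  fin_cases i <;> simp [laurentMonomial, one_apply]

theorem lift_laurentMonomial {v : Fin 2 → K2} (hv : AlgebraicIndependent ℂ v) (e : Fin 2 → ℤ) :
    lift v hv (laurentMonomial e) = ∏ i, v i ^ e i := by
  simp [laurentMonomial, map_zpow₀]

theorem algebraicIndependent_laurentMonomial_row (M : GL (Fin 2) ℤ) :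
    AlgebraicIndependent ℂ fun i ↦ laurentMonomial ((M : Matrix (Fin 2) (Fin 2) ℤ) i) := by
  refine isTranscendenceBasis_var.algebraicIndependent_of_mem_adjoin fun i ↦ ?_
  rw [← laurentMonomial_one_row, ← Units.inv_mul M, mul_apply_eq_vecMul, laurentMonomial_vecMul]
  exact prod_mem fun j _ ↦
    zpow_mem (IntermediateField.subset_adjoin _ _ (Set.mem_range_self j)) _

theorem lift_laurentMonomial_row {A B : Matrix (Fin 2) (Fin 2) ℤ}
    (hA : AlgebraicIndependent ℂ fun i ↦ laurentMonomial (A i)) (hBA : B * A = 1) (i : Fin 2) :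
    lift _ hA (laurentMonomial (B i)) = var i := by
  rw [lift_laurentMonomial, ← laurentMonomial_vecMul, ← mul_apply_eq_vecMul, hBA,
    laurentMonomial_one_row]

theorem algebraicIndependent_algebraMap_mul_var (c : Fin 2 → ℂˣ) :
    AlgebraicIndependent ℂ fun i ↦ algebraMap ℂ K2 (c i) * var i := by
  refine isTranscendenceBasis_var.algebraicIndependent_of_mem_adjoin fun i ↦ ?_
  have : var i = algebraMap ℂ K2 ↑(c i)⁻¹ * (algebraMap ℂ K2 (c i) * var i) := by
    rw [← mul_assoc, ← map_mul, Units.inv_mul, map_one, one_mul]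
  rw [this]
  exact mul_mem (IntermediateField.algebraMap_mem _ _)
    (IntermediateField.subset_adjoin _ _ (Set.mem_range_self i))

theorem lift_algebraMap_mul_var {v : Fin 2 → K2} (hv : AlgebraicIndependent ℂ v) (a : ℂ)
    (i : Fin 2) : lift v hv (algebraMap ℂ K2 a * var i) = algebraMap ℂ K2 a * v i := by
  rw [map_mul, AlgHom.commutes, lift_var]

end K2

namespace Cremona

open K2

theorem ext_var {f g : Cremona} (h : ∀ i, f (var i) = g (var i)) : f = g :=
  AlgEquiv.coe_toAlgHom_injective (algHom_ext h)

def ofLift (v w : Fin 2 → K2) (hv : AlgebraicIndependent ℂ v) (hw : AlgebraicIndependent ℂ w)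
    (hvw : ∀ i, lift v hv (w i) = var i) (hwv : ∀ i, lift w hw (v i) = var i) : Cremona :=
  AlgEquiv.ofAlgHom (lift v hv) (lift w hw) (algHom_ext fun i ↦ by simp [hvw])
    (algHom_ext fun i ↦ by simp [hwv])

theorem ofLift_var {v w : Fin 2 → K2} {hv hw hvw hwv} (i : Fin 2) :
    ofLift v w hv hw hvw hwv (var i) = v i :=
  lift_var hv i

def torus : (Fin 2 → ℂˣ) →* Cremona :=
  MonoidHom.mk' (fun c ↦ ofLift _ _ (algebraicIndependent_algebraMap_mul_var c)
      (algebraicIndependent_algebraMap_mul_var c⁻¹)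
      (fun i ↦ by rw [lift_algebraMap_mul_var, ← mul_assoc, ← map_mul, Pi.inv_apply,
        Units.inv_mul, map_one, one_mul])
      (fun i ↦ by rw [lift_algebraMap_mul_var, ← mul_assoc, ← map_mul, Pi.inv_apply,
        Units.mul_inv, map_one, one_mul]))
    fun c d ↦ ext_var fun i ↦ by
      rw [AlgEquiv.mul_apply, ofLift_var, ofLift_var, map_mul, AlgEquiv.commutes, ofLift_var,
        ← mul_assoc, ← map_mul, Pi.mul_apply, Units.val_mul, mul_comm (c i : ℂ)]

theorem torus_var (c : Fin 2 → ℂˣ) (i : Fin 2) :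
    torus c (var i) = algebraMap ℂ K2 (c i) * var i :=
  lift_var (algebraicIndependent_algebraMap_mul_var c) i

theorem torus_laurentMonomial (c : Fin 2 → ℂˣ) (e : Fin 2 → ℤ) :
    torus c (laurentMonomial e) = algebraMap ℂ K2 ↑(∏ i, c i ^ e i) * laurentMonomial e := by
  simp only [laurentMonomial, map_prod, map_zpow₀, torus_var, mul_zpow, Finset.prod_mul_distrib,
    Units.coe_prod, Units.val_zpow_eq_zpow_val]

theorem torus_injective : Function.Injective torus := by
  intro c d h
  funext i
  have := congr($h (var i))
  rw [torus_var, torus_var] at this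
  exact Units.val_injective
    ((algebraMap ℂ K2).injective (mul_right_cancel₀ (var_ne_zero i) this))

def monomialMap (M : GL (Fin 2) ℤ) : Cremona :=
  ofLift _ _ (algebraicIndependent_laurentMonomial_row M)
    (algebraicIndependent_laurentMonomial_row M⁻¹)
    (lift_laurentMonomial_row _ M.inv_mul) (lift_laurentMonomial_row _ M.mul_inv)

theorem monomialMap_var (M : GL (Fin 2) ℤ) (i : Fin 2) :
    monomialMap M (var i) = laurentMonomial ((M : Matrix (Fin 2) (Fin 2) ℤ) i) :=
  lift_var (algebraicIndependent_laurentMonomial_row M) i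

theorem monomialMap_mul_torus (M : GL (Fin 2) ℤ) {c d : Fin 2 → ℂˣ}
    (h : ∀ i, c i = ∏ j, d j ^ (M : Matrix (Fin 2) (Fin 2) ℤ) i j) :
    monomialMap M * torus c = torus d * monomialMap M :=
  ext_var fun i ↦ by
    rw [AlgEquiv.mul_apply, AlgEquiv.mul_apply, torus_var, map_mul, AlgEquiv.commutes,
      monomialMap_var, torus_laurentMonomial, h]

theorem isConj_torus_pow {ζ : ℂˣ} {p m : ℕ} (hζ : ζ ^ p = 1) (hm : m.Coprime p) :
    IsConj (torus ![ζ, 1] ^ m) (torus ![ζ, 1]) := by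
  obtain ⟨u, v, huv⟩ := Nat.isCoprime_iff_coprime.2 hm
  have hdet : IsUnit !![(m : ℤ), -v; (p : ℤ), u].det := by
    rw [Matrix.det_fin_two_of, show (m : ℤ) * u - -v * p = 1 by linear_combination huv]
    exact isUnit_one
  let M : GL (Fin 2) ℤ := ((Matrix.isUnit_iff_isUnit_det _).2 hdet).unit
  rw [← map_pow]
  refine isConj_iff.2 ⟨monomialMap M, ?_⟩
  rw [monomialMap_mul_torus M (d := ![ζ, 1]), mul_inv_cancel_right]
  intro i
  fin_cases i <;> simp [M, Fin.prod_univ_two, hζ]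

theorem exists_ne_one_pow_prime_eq_one_isConj_pow {p : ℕ} (hp : p.Prime) :
    ∃ σ : Cremona, σ ≠ 1 ∧ σ ^ p = 1 ∧ ∀ m, 0 < m → m < p → IsConj (σ ^ m) σ := by
  have hζ := Complex.isPrimitiveRoot_exp p hp.ne_zero
  set ζ := (hζ.isUnit hp.ne_zero).unit
  have hζp : ζ ^ p = 1 := Units.ext (by simpa [ζ] using hζ.pow_eq_one)
  refine ⟨torus ![ζ, 1], fun h ↦ ?_, ?_, fun m hm hmp ↦ isConj_torus_pow hζp ?_⟩
  · have := congr_fun (torus_injective (h.trans (map_one torus).symm)) 0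
    exact hζ.ne_one hp.one_lt (by simpa [ζ] using congr_arg Units.val this)
  · rw [← map_pow, ← map_one torus]
    congr 1
    ext i
    fin_cases i <;> simp [hζp]
  · exact ((Nat.Prime.coprime_iff_not_dvd hp).2 (Nat.not_dvd_of_pos_of_lt hm hmp)).symm

end Cremona

theorem cremona_not_linear_general (k : Type*) [Field k] [CharZero k] (n : ℕ)
    (φ : Cremona →* GL (Fin n) k) : ¬ Function.Injective φ := by
  intro hφ
  obtain ⟨p, hnp, hp⟩ := Nat.exists_infinite_primes (n + 2)
  obtain ⟨σ, hσ1, hσp, hconj⟩ := Cremona.exists_ne_one_pow_prime_eq_one_isConj_pow hp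
  have : φ σ = 1 := Matrix.GeneralLinearGroup.eq_one_of_pow_prime_eq_one_of_isConj_pow hp
    (by rwa [Fintype.card_fin])
    (by rw [← map_pow, hσp, map_one]) fun m hm hmp ↦ by
      simpa using φ.map_isConj (hconj m hm hmp)
  exact hσ1 (hφ (this.trans (map_one φ).symm))

/-- The Cremona group does not embed in `GL_n(k)` for `k` a field of
characteristic zero. -/
theorem cremona_not_linear (k : Type*) [Field k] [CharZero k] (n : ℕ) (hn : 0 < n)
    (φ : Cremona →* GL (Fin n) k) : ¬ Function.Injective φ :=
  cremona_not_linear_general k n φ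
end
end

section
/- Let G be the group of affine transformations of the complex line, i.e. the group of bijections of ℂ of the form z ↦ αz + β with α ∈ ℂ* and β ∈ ℂ (equivalently, the semidirect product ℂ ⋊ ℂ*). Then every group automorphism of G is obtained from an inner automorphism and the action of a field automorphism of ℂ: for every group automorphism φ of G there exist g ∈ G and a field automorphism κ of ℂ such that φ(f) = g ∘ κ(f) ∘ g⁻¹ for all f ∈ G, where κ(f) denotes the transformation z ↦ κ(α)z + κ(β) when f is z ↦ αz + β. -/
noncomputable section

/-- The group of affine transformations `z ↦ αz + β` (`α ∈ ℂ*`, `β ∈ ℂ`) of the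
complex line, realized as the group of affine equivalences of `ℂ`. -/
abbrev AffC : Type := ℂ ≃ᵃ[ℂ] ℂ

/-! Translations are the affine maps that commute with all of their conjugates, so an
automorphism `φ` restricts to an additive bijection `ψ` of the translation group `K`.
Conjugating a translation by `f` multiplies it by the slope of `f`; this forces
`ψ (a * b) * ψ 1 = ψ a * ψ b`, so `κ = ψ / ψ 1` is a field automorphism and `φ` acts on slopes
through `κ`. The images of the maps fixing `0` all commute with the image of `z ↦ -z`, which
(for `2 ≠ 0`) makes them fix a common point `b`; then `g z = ψ 1 * z + b`. -/

theorem AddEquiv.exists_ringEquiv_of_map_mul {K : Type*} [Field K] (ψ : K ≃+ K)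
    (h : ∀ a b, ψ (a * b) * ψ 1 = ψ a * ψ b) : ∃ κ : K ≃+* K, ∀ x, ψ x = ψ 1 * κ x := by
  have h1 : ψ 1 ≠ 0 := by simp
  refine ⟨{ toFun x := ψ x / ψ 1
            invFun y := ψ.symm (y * ψ 1)
            left_inv x := by simp [h1]
            right_inv y := by simp [h1]
            map_mul' a b := by
              field_simp
              exact h a b
            map_add' a b := by simp [add_div] }, fun x => ?_⟩
  exact (mul_div_cancel₀ _ h1).symm

namespace AffineLine

variable {K : Type*} [Field K]

theorem linear_apply (f : K ≃ᵃ[K] K) (z : K) : f.linear z = z * f.linear 1 := by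
  rw [← smul_eq_mul, ← map_smul, smul_eq_mul, mul_one]

def slope : (K ≃ᵃ[K] K) →* K where
  toFun f := f.linear 1
  map_one' := rfl
  map_mul' f _ := (linear_apply f _).trans (mul_comm _ _)

theorem apply_eq (f : K ≃ᵃ[K] K) (z : K) : f z = slope f * z + f 0 := by
  have := f.map_vadd 0 z
  rw [vadd_eq_add, vadd_eq_add, add_zero, linear_apply] at this
  rw [this, mul_comm]
  rfl

theorem slope_eq_sub (f : K ≃ᵃ[K] K) : slope f = f 1 - f 0 := by
  rw [apply_eq f 1, mul_one, add_sub_cancel_right]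

theorem slope_ne_zero (f : K ≃ᵃ[K] K) : slope f ≠ 0 := by
  intro h
  have : f 1 = f 0 := by rw [apply_eq, h, zero_mul, zero_add]
  exact one_ne_zero (f.injective this)

theorem ext_of_slope {f g : K ≃ᵃ[K] K} (h : slope f = slope g) (h₀ : f 0 = g 0) : f = g :=
  AffineEquiv.ext fun z => by rw [apply_eq f, apply_eq g, h, h₀]

theorem mul_apply_zero (f g : K ≃ᵃ[K] K) : (f * g) 0 = slope f * g 0 + f 0 :=
  apply_eq f (g 0)

theorem inv_apply_zero (f : K ≃ᵃ[K] K) : f⁻¹ 0 = -f 0 / slope f := by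
  have h : f (f⁻¹ 0) = 0 := f.apply_symm_apply 0
  rw [apply_eq] at h
  field_simp [slope_ne_zero f]
  linear_combination h

theorem commute_iff {f g : K ≃ᵃ[K] K} :
    Commute f g ↔ slope f * g 0 + f 0 = slope g * f 0 + g 0 := by
  rw [← mul_apply_zero, ← mul_apply_zero]
  refine ⟨fun h => congrArg (fun u : K ≃ᵃ[K] K => u 0) h.eq, fun h => ext_of_slope ?_ h⟩
  rw [map_mul, map_mul, mul_comm]

theorem two_mul_apply_zero_of_commute {f g : K ≃ᵃ[K] K} (h : Commute f g) (hg : slope g = -1) :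
    2 * f 0 = (1 - slope f) * g 0 := by
  linear_combination commute_iff.mp h + f 0 * hg

@[simp]
theorem slope_constVAdd (b : K) : slope (AffineEquiv.constVAdd K K b) = 1 := rfl

theorem constVAdd_injective : Function.Injective (AffineEquiv.constVAdd K K) := fun a b h => by
  simpa using congrArg (fun u : K ≃ᵃ[K] K => u 0) h

theorem slope_eq_one_iff {f : K ≃ᵃ[K] K} : slope f = 1 ↔ f = AffineEquiv.constVAdd K K (f 0) := by
  refine ⟨fun h => ext_of_slope (by simp [h]) (by simp), fun h => by rw [h, slope_constVAdd]⟩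

theorem conj_constVAdd (f : K ≃ᵃ[K] K) (b : K) :
    f * AffineEquiv.constVAdd K K b * f⁻¹ = AffineEquiv.constVAdd K K (slope f * b) := by
  refine ext_of_slope ?_ ?_
  · simp [map_inv, mul_inv_cancel₀ (slope_ne_zero f)]
  · rw [mul_apply_zero, mul_apply_zero, inv_apply_zero]
    simp only [map_mul, slope_constVAdd, mul_one, AffineEquiv.constVAdd_apply, vadd_eq_add,
      add_zero]
    field_simp [slope_ne_zero f]
    ring

theorem slope_eq_one_iff_forall_commute_conj {f : K ≃ᵃ[K] K} :
    slope f = 1 ↔ ∀ h : K ≃ᵃ[K] K, Commute f (h * f * h⁻¹) := by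
  refine ⟨fun hf h => ?_, fun H => ?_⟩
  · rw [slope_eq_one_iff] at hf
    rw [hf, conj_constVAdd]
    exact (Commute.all (Multiplicative.ofAdd _) (Multiplicative.ofAdd _)).map
      (AffineEquiv.constVAddHom K K)
  · have key := commute_iff.mp (H (AffineEquiv.constVAdd K K 1))
    simp only [map_mul, map_inv, slope_constVAdd, mul_apply_zero, inv_apply_zero, one_mul, mul_one,
      inv_one, div_one, mul_neg, AffineEquiv.constVAdd_apply, vadd_eq_add, add_zero] at key
    have : (slope f - 1) ^ 2 = 0 := by linear_combination -key
    exact sub_eq_zero.mp (pow_eq_zero_iff two_ne_zero |>.mp this)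

variable (φ : (K ≃ᵃ[K] K) ≃* (K ≃ᵃ[K] K))

theorem slope_map_eq_one {f : K ≃ᵃ[K] K} (hf : slope f = 1) :
    slope (φ f) = 1 := by
  rw [slope_eq_one_iff_forall_commute_conj] at hf ⊢
  intro h
  simpa using (hf (φ.symm h)).map φ

theorem exists_slope_eq {a : K} (ha : a ≠ 0) (b : K) : ∃ f : K ≃ᵃ[K] K, slope f = a ∧ f 0 = b :=
  ⟨AffineEquiv.constVAdd K K b * AffineEquiv.homothetyUnitsMulHom 0 (Units.mk0 a ha), by
    simp [slope_eq_sub, AffineMap.homothety_apply], by simp⟩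

theorem map_constVAdd_eq_constVAdd (b : K) :
    φ (AffineEquiv.constVAdd K K b) =
      AffineEquiv.constVAdd K K (φ (AffineEquiv.constVAdd K K b) 0) :=
  slope_eq_one_iff.mp (slope_map_eq_one φ (slope_constVAdd b))

def translationEquiv : K ≃+ K where
  toFun b := φ (AffineEquiv.constVAdd K K b) 0
  invFun b := φ.symm (AffineEquiv.constVAdd K K b) 0
  left_inv b := by simp [← map_constVAdd_eq_constVAdd]
  right_inv b := by simp [← map_constVAdd_eq_constVAdd φ.symm]
  map_add' a b := by
    rw [AffineEquiv.constVAdd_add, ← AffineEquiv.mul_def, map_mul, map_constVAdd_eq_constVAdd φ a,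
      map_constVAdd_eq_constVAdd φ b]
    simp [add_comm]

theorem map_constVAdd (b : K) :
    φ (AffineEquiv.constVAdd K K b) = AffineEquiv.constVAdd K K (translationEquiv φ b) :=
  map_constVAdd_eq_constVAdd φ b

theorem translationEquiv_slope_mul (f : K ≃ᵃ[K] K) (b : K) :
    translationEquiv φ (slope f * b) = slope (φ f) * translationEquiv φ b := by
  apply constVAdd_injective
  rw [← map_constVAdd, ← conj_constVAdd, map_mul, map_mul, map_inv, map_constVAdd, conj_constVAdd]

theorem translationEquiv_mul_mul_one (a b : K) :
    translationEquiv φ (a * b) * translationEquiv φ 1 =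
      translationEquiv φ a * translationEquiv φ b := by
  rcases eq_or_ne a 0 with rfl | ha
  · simp
  obtain ⟨f, rfl, -⟩ := exists_slope_eq ha 0
  rw [translationEquiv_slope_mul, ← mul_one (slope f), translationEquiv_slope_mul]
  ring

theorem exists_ringEquiv_slope_map :
    ∃ κ : K ≃+* K, (∀ b, translationEquiv φ b = translationEquiv φ 1 * κ b) ∧
      ∀ f, slope (φ f) = κ (slope f) := by
  obtain ⟨κ, hκ⟩ := AddEquiv.exists_ringEquiv_of_map_mul _ (translationEquiv_mul_mul_one φ)
  refine ⟨κ, hκ, fun f => ?_⟩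
  have h := translationEquiv_slope_mul φ f 1
  rw [mul_one, hκ] at h
  exact mul_left_cancel₀ (by simp : translationEquiv φ 1 ≠ 0) ((mul_comm _ _).trans h.symm)

theorem exists_eq_conj_ringEquiv (h2 : (2 : K) ≠ 0) :
    ∃ (g : K ≃ᵃ[K] K) (κ : K ≃+* K), ∀ f z, φ f z = g (κ (f (κ.symm (g.symm z)))) := by
  obtain ⟨κ, hψ, hslope⟩ := exists_ringEquiv_slope_map φ
  obtain ⟨d, hd, hd₀⟩ := exists_slope_eq (neg_ne_zero.mpr one_ne_zero) (0 : K)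
  obtain ⟨g, hg, hg₀⟩ :=
    exists_slope_eq (by simp : translationEquiv φ 1 ≠ 0) (φ d 0 / 2)
  refine ⟨g, κ, fun f z => ?_⟩
  obtain ⟨f₀, hf₀, hf₀₀⟩ := exists_slope_eq (slope_ne_zero f) 0
  have hφf : φ f = AffineEquiv.constVAdd K K (translationEquiv φ (f 0)) * φ f₀ := by
    rw [← map_constVAdd, ← map_mul]
    congr 1
    refine ext_of_slope ?_ ?_ <;> simp [hf₀, hf₀₀]
  have hcomm : Commute (φ f₀) (φ d) := (commute_iff.mpr (by rw [hf₀₀, hd₀]; ring)).map φ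
  have hφf₀ : φ f₀ 0 = (1 - κ (slope f)) * g 0 := by
    rw [hg₀, ← hf₀, ← hslope]
    field_simp
    linear_combination two_mul_apply_zero_of_commute hcomm (by rw [hslope, hd, map_neg, map_one])
  have hgz : g (g.symm z) = z := g.apply_symm_apply z
  rw [apply_eq g, hg] at hgz
  rw [hφf, AffineEquiv.coe_mul, Function.comp_apply, AffineEquiv.constVAdd_apply, vadd_eq_add,
    apply_eq (φ f₀), apply_eq g, apply_eq f (κ.symm _), map_add, map_mul, κ.apply_symm_apply, hψ,
    hslope, hf₀, hφf₀, hg]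
  linear_combination - κ (slope f) * hgz

end AffineLine

/-- Every group automorphism of the affine group of the complex line is obtained
from an inner automorphism and the action of a field automorphism of `ℂ`:
`φ(f) = g ∘ κ(f) ∘ g⁻¹` where `κ(f) = κ ∘ f ∘ κ⁻¹` sends `z ↦ αz+β` to
`z ↦ κ(α)z+κ(β)`. -/
theorem affine_line_automorphisms (φ : AffC ≃* AffC) :
    ∃ (g : AffC) (κ : ℂ ≃+* ℂ),
      ∀ (f : AffC) (z : ℂ), φ f z = g (κ (f (κ.symm (g.symm z)))) :=
  AffineLine.exists_eq_conj_ringEquiv φ two_ne_zero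
end
end

section
/- For every integer k ≥ 2, the matrices [[1,k],[0,1]] and [[1,0],[k,1]] generate a free subgroup of rank 2 in SL₂(ℤ): the group homomorphism from the free group on two generators to SL₂(ℤ) sending the two generators respectively to [[1,k],[0,1]] and [[1,0],[k,1]] is injective. -/
noncomputable section

/-- The matrix `[[1,k],[0,1]]` as an element of `SL₂(ℤ)`. -/
def upperMat (k : ℕ) : Matrix.SpecialLinearGroup (Fin 2) ℤ :=
  ⟨!![1, (k : ℤ); 0, 1], by simp [Matrix.det_fin_two_of]⟩

/-- The matrix `[[1,0],[k,1]]` as an element of `SL₂(ℤ)`. -/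
def lowerMat (k : ℕ) : Matrix.SpecialLinearGroup (Fin 2) ℤ :=
  ⟨!![1, 0; (k : ℤ), 1], by simp [Matrix.det_fin_two_of]⟩

/-!
Let `SL₂(ℤ)` act on the upper half plane by Möbius transformations. Then `A = upperMat k = T ^ k`
is the translation `z ↦ z + k`, which for `k ≥ 2` maps everything off the half plane `re z ≤ -1` into
`re z ≥ 1`, while `A⁻¹` maps everything off `re z ≥ 1` into `re z ≤ -1`. The matrix
`B = lowerMat k` is the conjugate `S⁻¹ A⁻¹ S` by the inversion `S : z ↦ -1/z`, so it plays
ping-pong on the images of these two half planes under `S⁻¹`. Those images lie in `|re z| < 1`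
(since `|re (-1/z)| = |re z| / |z|² < 1 / |re z|`), so all four sets are disjoint and the
ping-pong lemma applies.
-/

open UpperHalfPlane ModularGroup Matrix.SpecialLinearGroup
open scoped Pointwise

lemma upperMat_eq_T_zpow (k : ℕ) : upperMat k = T ^ (k : ℤ) := by
  ext i j
  rw [coe_T_zpow]
  rfl

lemma lowerMat_eq_conj (k : ℕ) : lowerMat k = S⁻¹ * (upperMat k)⁻¹ * S := by
  ext : 1
  rw [coe_mul, coe_mul, coe_inv, coe_inv, coe_S, upperMat, lowerMat]
  simp [Matrix.adjugate_fin_two]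

lemma lowerMat_inv_eq_conj (k : ℕ) : (lowerMat k)⁻¹ = S⁻¹ * upperMat k * S := by
  rw [lowerMat_eq_conj]
  group

lemma conj_smul_compl_subset {G α : Type*} [Group G] [MulAction G α] {g h : G}
    {s t : Set α} (hst : g • sᶜ ⊆ t) : (h⁻¹ * g * h) • (h⁻¹ • s)ᶜ ⊆ h⁻¹ • t := by
  rw [← Set.smul_set_compl, mul_smul, mul_smul, smul_inv_smul]
  exact Set.smul_set_mono hst

lemma T_zpow_smul_compl_subset_right {n : ℤ} (hn : 2 ≤ n) :
    T ^ n • {z : ℍ | z.re ≤ -1}ᶜ ⊆ {z | 1 ≤ z.re} := by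
  rintro _ ⟨z, hz, rfl⟩
  simp only [Set.mem_compl_iff, Set.mem_ofPred_eq, not_le] at hz
  simp only [Set.mem_ofPred_eq, modular_T_zpow_smul, vadd_re]
  have : (2 : ℝ) ≤ n := by exact_mod_cast hn
  linarith

lemma T_zpow_smul_compl_subset_left {n : ℤ} (hn : n ≤ -2) :
    T ^ n • {z : ℍ | 1 ≤ z.re}ᶜ ⊆ {z | z.re ≤ -1} := by
  rintro _ ⟨z, hz, rfl⟩
  simp only [Set.mem_compl_iff, Set.mem_ofPred_eq, not_le] at hz
  simp only [Set.mem_ofPred_eq, modular_T_zpow_smul, vadd_re]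
  have : (n : ℝ) ≤ -2 := by exact_mod_cast hn
  linarith

lemma abs_re_S_smul_lt_one {z : ℍ} (hz : 1 ≤ |z.re|) : |(S • z).re| < 1 := by
  have hre : (S • z).re = -z.re / (z.re ^ 2 + z.im ^ 2) := by
    rw [modular_S_smul]
    simp [Complex.inv_re, Complex.normSq_apply, neg_div, sq]
  have hpos : 0 < z.re ^ 2 + z.im ^ 2 := by nlinarith [z.im_pos]
  rw [hre, abs_div, abs_neg, abs_of_pos hpos, div_lt_one hpos]
  nlinarith [sq_abs z.re, z.im_pos]

lemma disjoint_inv_S_smul {s t : Set ℍ} (hs : s ⊆ {z | 1 ≤ |z.re|})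
    (ht : t ⊆ {z | 1 ≤ |z.re|}) : Disjoint s (S⁻¹ • t) := by
  rw [Set.disjoint_smul_set_right, inv_inv, Set.disjoint_left]
  rintro _ ⟨z, hz, rfl⟩ hSz
  have : (1 : ℝ) ≤ |(S • z).re| := ht hSz
  linarith [abs_re_S_smul_lt_one (hs hz)]

/-- For `k ≥ 2`, the matrices `[[1,k],[0,1]]` and `[[1,0],[k,1]]` generate a free
subgroup of rank `2` in `SL₂(ℤ)`: the homomorphism from the free group on two
generators sending them respectively to these matrices is injective. -/
theorem free_subgroup_of_sl2 (k : ℕ) (hk : 2 ≤ k) :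
    Function.Injective
      (FreeGroup.lift (fun b : Bool => if b then upperMat k else lowerMat k) :
        FreeGroup Bool →* Matrix.SpecialLinearGroup (Fin 2) ℤ) := by
  set R : Set ℍ := {z | 1 ≤ z.re}
  set L : Set ℍ := {z | z.re ≤ -1}
  have hR : R ⊆ {z | 1 ≤ |z.re|} := fun z (hz : 1 ≤ z.re) => hz.trans (le_abs_self _)
  have hL : L ⊆ {z | 1 ≤ |z.re|} := fun z (hz : z.re ≤ -1) =>
    (le_neg_of_le_neg hz).trans (neg_le_abs _)
  have hRL : Disjoint R L :=
    Set.disjoint_left.2 fun z (h₁ : 1 ≤ z.re) (h₂ : z.re ≤ -1) => by linarith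
  have hA : upperMat k • Lᶜ ⊆ R :=
    upperMat_eq_T_zpow k ▸ T_zpow_smul_compl_subset_right (by exact_mod_cast hk)
  have hA' : (upperMat k)⁻¹ • Rᶜ ⊆ L := by
    rw [upperMat_eq_T_zpow, ← zpow_neg]
    exact T_zpow_smul_compl_subset_left (by omega)
  refine FreeGroup.injective_lift_of_ping_pong _ (fun b => bif b then R else S⁻¹ • L)
    (fun b => bif b then L else S⁻¹ • R) ?_ (pairwise_disjoint_on_bool.2 (disjoint_inv_S_smul hR hL))
    (pairwise_disjoint_on_bool.2 (disjoint_inv_S_smul hL hR)) ?_ ?_ ?_ <;>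
    simp only [Bool.forall_bool, Pi.inv_apply, cond_true, cond_false, Bool.false_eq_true,
      ↓reduceIte]
  · exact ⟨(Set.nonempty_of_mem (show (-1 : ℝ) +ᵥ I ∈ L by simp [L])).smul_set,
      Set.nonempty_of_mem (show (1 : ℝ) +ᵥ I ∈ R by simp [R])⟩
  · exact ⟨⟨Set.disjoint_smul_set.2 hRL.symm, (disjoint_inv_S_smul hL hL).symm⟩,
      disjoint_inv_S_smul hR hR, hRL⟩
  · exact ⟨lowerMat_eq_conj k ▸ conj_smul_compl_subset hA', hA⟩
  · exact ⟨lowerMat_inv_eq_conj k ▸ conj_smul_compl_subset hA, hA'⟩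
end
end
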